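/- With ζ₁, ζ₂ as in the previous statement (phase vectors for Theorem 2 with parameters τ > max(k,|ξ|/2)), for every x ∈ ℝ³ with 0 ≤ x₃: Re(iζ₁·x + conj(iζ₂)·(x₁,x₂,2L-x₃)) = -2√(τ² - k²)(|ξ'|/|ξ|)(L - x₃). In particular, for 0 ≤ x₃ ≤ L this real part is ≤ 0 and tends to -∞ as τ → ∞ whenever x₃ < L. -/

import Mathlib

/-!
With `x* = (x₁, x₂, 2L - x₃)`, in the real part of `iζ₁·x + conj(iζ₂)·x*` the terms in `ξ/2`
and `√(τ² - |ξ|²/4) η₁` are purely imaginary, so only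
`√(τ² - k²) η₂·(x - x*)` survives. As `x - x*` points along `e₃`, this is
`-2 √(τ² - k²) η₂₃ (L - x₃)`, and `η₂₃ = |ξ'|/|ξ|` by the cross-product formula.
-/

open Matrix Complex Filter

noncomputable section

def nrm (x : Fin 3 → ℝ) : ℝ := Real.sqrt (x ⬝ᵥ x)

def cv (x : Fin 3 → ℝ) : Fin 3 → ℂ := fun j => (x j : ℂ)

lemma nrm_sq (x : Fin 3 → ℝ) : nrm x ^ 2 = x 0 ^ 2 + x 1 ^ 2 + x 2 ^ 2 := by
  have h : x ⬝ᵥ x = x 0 ^ 2 + x 1 ^ 2 + x 2 ^ 2 := by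
    simp only [dotProduct, Fin.sum_univ_three]; ring
  rw [nrm, h, Real.sq_sqrt (by positivity)]

lemma dotProduct_horizontal_le (ξ : Fin 3 → ℝ) : ![ξ 0, ξ 1, 0] ⬝ᵥ ![ξ 0, ξ 1, 0] ≤ ξ ⬝ᵥ ξ := by
  simp only [dotProduct, Fin.sum_univ_three, cons_val_zero, cons_val_one, cons_val_two,
    Nat.succ_eq_add_one, Nat.reduceAdd, tail_cons, head_cons]
  nlinarith [mul_self_nonneg (ξ 2)]

lemma nrm_horizontal_le (ξ : Fin 3 → ℝ) : nrm ![ξ 0, ξ 1, 0] ≤ nrm ξ :=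
  Real.sqrt_le_sqrt (dotProduct_horizontal_le ξ)

lemma crossProduct_normalized_apply_two {ξ : Fin 3 → ℝ} (h : 0 < nrm ![ξ 0, ξ 1, 0]) :
    crossProduct ((1 / nrm ![ξ 0, ξ 1, 0]) • ![ξ 1, -ξ 0, 0]) ((1 / nrm ξ) • ξ) 2
      = nrm ![ξ 0, ξ 1, 0] / nrm ξ := by
  have hξ : 0 < nrm ξ := h.trans_le (nrm_horizontal_le ξ)
  have hsq := nrm_sq ![ξ 0, ξ 1, 0]
  simp only [cross_apply, Pi.smul_apply, smul_eq_mul, cons_val_zero, cons_val_one, cons_val_two,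
    Nat.succ_eq_add_one, Nat.reduceAdd, tail_cons, head_cons] at hsq ⊢
  field_simp
  linarith

lemma re_phase_eq (a b : ℝ) (ξ η₁ η₂ x y : Fin 3 → ℝ) :
    (I * ((fun j => (ξ j : ℂ) / 2 + (a : ℂ) * η₁ j - I * (b : ℂ) * η₂ j) ⬝ᵥ cv x)
      + (fun j => starRingEnd ℂ (I * (-(ξ j : ℂ) / 2 + (a : ℂ) * η₁ j + I * (b : ℂ) * η₂ j)))
        ⬝ᵥ cv y).re
    = b * (η₂ ⬝ᵥ (x - y)) := by
  simp only [cv, dotProduct, Fin.sum_univ_three, add_re, mul_re, I_re, I_im,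
    conj_re, conj_im, sub_re, sub_im, add_im, mul_im, div_ofNat_re, div_ofNat_im, neg_re, neg_im,
    ofReal_re, ofReal_im, Pi.sub_apply]
  ring

lemma dotProduct_sub_reflect (η x : Fin 3 → ℝ) (L : ℝ) :
    η ⬝ᵥ (x - ![x 0, x 1, 2 * L - x 2]) = -2 * η 2 * (L - x 2) := by
  simp only [dotProduct, Fin.sum_univ_three, Pi.sub_apply, cons_val_zero, cons_val_one,
    cons_val_two, Nat.succ_eq_add_one, Nat.reduceAdd, tail_cons, head_cons]
  ring

theorem stmt_12_general (ξ η₁ η₂ : Fin 3 → ℝ) (k L : ℝ)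
    (hξ' : nrm ![ξ 0, ξ 1, 0] > 0)
    (hη₁ : η₁ = (1 / nrm ![ξ 0, ξ 1, 0]) • ![ξ 1, -ξ 0, 0])
    (hη₂ : η₂ = crossProduct η₁ ((1 / nrm ξ) • ξ))
    (ζ₁ ζ₂ : ℝ → Fin 3 → ℂ)
    (hζ₁ : ∀ τ, ζ₁ τ = fun j => (ξ j : ℂ) / 2
        + (Real.sqrt (τ^2 - (nrm ξ)^2 / 4) : ℝ) * (η₁ j : ℂ)
        - Complex.I * (Real.sqrt (τ^2 - k^2) : ℝ) * (η₂ j : ℂ))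
    (hζ₂ : ∀ τ, ζ₂ τ = fun j => -(ξ j : ℂ) / 2
        + (Real.sqrt (τ^2 - (nrm ξ)^2 / 4) : ℝ) * (η₁ j : ℂ)
        + Complex.I * (Real.sqrt (τ^2 - k^2) : ℝ) * (η₂ j : ℂ)) :
    (∀ τ : ℝ, τ > max k (nrm ξ / 2) → ∀ x : Fin 3 → ℝ, 0 ≤ x 2 →
      (Complex.I * (ζ₁ τ ⬝ᵥ cv x)
        + (fun j => starRingEnd ℂ (Complex.I * ζ₂ τ j)) ⬝ᵥ cv ![x 0, x 1, 2 * L - x 2]).re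
      = -2 * Real.sqrt (τ^2 - k^2) * (nrm ![ξ 0, ξ 1, 0] / nrm ξ) * (L - x 2)) ∧
    (∀ τ : ℝ, τ > max k (nrm ξ / 2) → ∀ x : Fin 3 → ℝ, 0 ≤ x 2 → x 2 ≤ L →
      (Complex.I * (ζ₁ τ ⬝ᵥ cv x)
        + (fun j => starRingEnd ℂ (Complex.I * ζ₂ τ j)) ⬝ᵥ cv ![x 0, x 1, 2 * L - x 2]).re
      ≤ 0) ∧
    (∀ x : Fin 3 → ℝ, 0 ≤ x 2 → x 2 < L →
      Tendsto (fun τ : ℝ =>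
        (Complex.I * (ζ₁ τ ⬝ᵥ cv x)
          + (fun j => starRingEnd ℂ (Complex.I * ζ₂ τ j)) ⬝ᵥ cv ![x 0, x 1, 2 * L - x 2]).re)
        atTop atBot) := by
  have hratio : 0 < nrm ![ξ 0, ξ 1, 0] / nrm ξ :=
    div_pos hξ' (hξ'.trans_le (nrm_horizontal_le ξ))
  have key : ∀ τ x,
      (Complex.I * (ζ₁ τ ⬝ᵥ cv x)
        + (fun j => starRingEnd ℂ (Complex.I * ζ₂ τ j)) ⬝ᵥ cv ![x 0, x 1, 2 * L - x 2]).re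
      = Real.sqrt (τ^2 - k^2) * (-2 * (nrm ![ξ 0, ξ 1, 0] / nrm ξ) * (L - x 2)) := by
    intro τ x
    rw [hζ₁, hζ₂, re_phase_eq, dotProduct_sub_reflect, hη₂, hη₁,
      crossProduct_normalized_apply_two hξ']
  refine ⟨fun τ _ x _ => (key τ x).trans (by ring), fun τ _ x _ hxL => ?_, fun x _ hxL => ?_⟩
  · rw [key]
    exact mul_nonpos_of_nonneg_of_nonpos (Real.sqrt_nonneg _) (by nlinarith)
  · simp_rw [key]
    refine Tendsto.atTop_mul_const_of_neg (by nlinarith) ?_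
    exact Real.tendsto_sqrt_atTop.comp
      (tendsto_atTop_add_const_right _ _ (tendsto_pow_atTop two_ne_zero))

theorem stmt_12 (ξ η₁ η₂ : Fin 3 → ℝ) (k L : ℝ)
    (hξ' : nrm ![ξ 0, ξ 1, 0] > 0)
    (hη₁ : η₁ = (1 / nrm ![ξ 0, ξ 1, 0]) • ![ξ 1, -ξ 0, 0])
    (hη₂ : η₂ = crossProduct η₁ ((1 / nrm ξ) • ξ))
    (hk : 0 < k) (hL : 0 < L)
    (ζ₁ ζ₂ : ℝ → Fin 3 → ℂ)
    (hζ₁ : ∀ τ, ζ₁ τ = fun j => (ξ j : ℂ) / 2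
        + (Real.sqrt (τ^2 - (nrm ξ)^2 / 4) : ℝ) * (η₁ j : ℂ)
        - Complex.I * (Real.sqrt (τ^2 - k^2) : ℝ) * (η₂ j : ℂ))
    (hζ₂ : ∀ τ, ζ₂ τ = fun j => -(ξ j : ℂ) / 2
        + (Real.sqrt (τ^2 - (nrm ξ)^2 / 4) : ℝ) * (η₁ j : ℂ)
        + Complex.I * (Real.sqrt (τ^2 - k^2) : ℝ) * (η₂ j : ℂ)) :
    (∀ τ : ℝ, τ > max k (nrm ξ / 2) → ∀ x : Fin 3 → ℝ, 0 ≤ x 2 →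
      (Complex.I * (ζ₁ τ ⬝ᵥ cv x)
        + (fun j => starRingEnd ℂ (Complex.I * ζ₂ τ j)) ⬝ᵥ cv ![x 0, x 1, 2 * L - x 2]).re
      = -2 * Real.sqrt (τ^2 - k^2) * (nrm ![ξ 0, ξ 1, 0] / nrm ξ) * (L - x 2)) ∧
    (∀ τ : ℝ, τ > max k (nrm ξ / 2) → ∀ x : Fin 3 → ℝ, 0 ≤ x 2 → x 2 ≤ L →
      (Complex.I * (ζ₁ τ ⬝ᵥ cv x)
        + (fun j => starRingEnd ℂ (Complex.I * ζ₂ τ j)) ⬝ᵥ cv ![x 0, x 1, 2 * L - x 2]).re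
      ≤ 0) ∧
    (∀ x : Fin 3 → ℝ, 0 ≤ x 2 → x 2 < L →
      Tendsto (fun τ : ℝ =>
        (Complex.I * (ζ₁ τ ⬝ᵥ cv x)
          + (fun j => starRingEnd ℂ (Complex.I * ζ₂ τ j)) ⬝ᵥ cv ![x 0, x 1, 2 * L - x 2]).re)
        atTop atBot) :=
  stmt_12_general ξ η₁ η₂ k L hξ' hη₁ hη₂ ζ₁ ζ₂ hζ₁ hζ₂
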